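/- Let n ≥ 2 and let P be a partial n-Metric on a set X. For all a, b ∈ X: P(a,…,a,b) ≤ (n−1)·P(b,…,b,a) − (n−2)·P(b,…,b), where P(a,…,a,b) has n−1 copies of a and one b, P(b,…,b,a) has n−1 copies of b and one a, and P(b,…,b) has n copies of b. -/
import Mathlib


/-- The `n`-tuple with `n − 1` copies of `a` and `b` in the last coordinate. -/
def repl {X : Type*} {n : ℕ} (a b : X) : Fin n → X :=
  fun i => if i.val = n - 1 then b else a

/-- `P` is a partial n-𝔐etric on `X` (for `2 ≤ n`). -/
def IsPartialNMetric {X : Type*} {n : ℕ} (hn : 2 ≤ n) (P : (Fin n → X) → ℝ) : Prop :=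
  (∀ x₁ x₂ : X, P (fun _ => x₁) ≤ P (repl x₁ x₂)) ∧
  (∀ (x : Fin n → X) (σ : Equiv.Perm (Fin n)), P (x ∘ σ) = P x) ∧
  (∀ x₁ x₂ : X,
    (P (repl x₁ x₂) = P (fun _ => x₁) ∧ P (repl x₂ x₁) = P (fun _ => x₂)) ↔ x₁ = x₂) ∧
  (∀ (x : Fin n → X) (a : X),
    P x ≤ P (Function.update x ⟨n - 1, by omega⟩ a) + P (repl a (x ⟨n - 1, by omega⟩))
      - P (fun _ => a))

/-- Tuple whose first `k` coordinates are `b` and the rest are `a`. -/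
def Stup {X : Type*} {n : ℕ} (a b : X) (k : ℕ) : Fin n → X :=
  fun i => if i.val < k then b else a

/-- `P(a,…,a,b) ≤ (n−1)·P(b,…,b,a) − (n−2)·P(b,…,b)`. -/
theorem partialNMetric_swap_bound {X : Type*} {n : ℕ} (hn : 2 ≤ n)
    (P : (Fin n → X) → ℝ) (hP : IsPartialNMetric hn P) (a b : X) :
    P (repl a b) ≤ ((n : ℝ) - 1) * P (repl b a) - ((n : ℝ) - 2) * P (fun _ => b) := by
  obtain ⟨h1, hsym, h3, hineq⟩ := hP
  -- S (n-1) is repl b a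
  have hend : (Stup a b (n - 1) : Fin n → X) = repl b a := by
    funext i
    have := i.isLt
    simp only [Stup, repl]
    split_ifs <;> first | rfl | omega
  -- P (repl a b) = P (S 1) via a swap permutation
  have hS1 : P (repl a b) = P (Stup a b 1) := by
    have h := hsym (Stup a b 1) (Equiv.swap ⟨0, by omega⟩ ⟨n - 1, by omega⟩)
    have heq : (Stup a b 1 : Fin n → X) ∘
        (Equiv.swap (⟨0, by omega⟩ : Fin n) ⟨n - 1, by omega⟩) = repl a b := by
      funext i
      have := i.isLt
      simp only [Function.comp, Equiv.swap_apply_def, Stup, repl, Fin.ext_iff, Fin.val_mk]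
      split_ifs <;> first | rfl | omega | (simp only [Fin.ext_iff, Fin.val_mk] at *; omega)
    rw [heq] at h
    exact h
  -- key step inequality
  have step : ∀ k, 1 ≤ k → k ≤ n - 2 →
      P (Stup a b k) ≤ P (Stup a b (k + 1)) + P (repl b a) - P (fun _ => b) := by
    intro k hk1 hk2
    have h := hineq (Stup a b k) b
    have hlast : (Stup a b k : Fin n → X) ⟨n - 1, by omega⟩ = a := by
      simp only [Stup]
      rw [if_neg]; omega
    rw [hlast] at h
    have hupd : Function.update (Stup a b k : Fin n → X) ⟨n - 1, by omega⟩ b =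
        (Stup a b (k + 1) : Fin n → X) ∘
          (Equiv.swap (⟨k, by omega⟩ : Fin n) ⟨n - 1, by omega⟩) := by
      funext i
      have := i.isLt
      simp only [Function.comp, Equiv.swap_apply_def, Stup, Function.update_apply, Fin.ext_iff, Fin.val_mk]
      split_ifs <;> first | rfl | omega | (simp only [Fin.ext_iff, Fin.val_mk] at *; omega)
    rw [hupd, hsym] at h
    exact h
  -- chained inequality by induction
  have main : ∀ m, m ≤ n - 2 →
      P (Stup a b (n - 1 - m)) ≤ P (Stup a b (n - 1)) +
        (m : ℝ) * (P (repl b a) - P (fun _ => b)) := by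
    intro m
    induction m with
    | zero => intro _; simp
    | succ m ih =>
      intro hm
      have hk1 : 1 ≤ n - 1 - (m + 1) := by omega
      have hk2 : n - 1 - (m + 1) ≤ n - 2 := by omega
      have hstep := step (n - 1 - (m + 1)) hk1 hk2
      have hkk : n - 1 - (m + 1) + 1 = n - 1 - m := by omega
      rw [hkk] at hstep
      have hih := ih (by omega)
      push_cast
      push_cast at hih
      linarith
  have hmain := main (n - 2) le_rfl
  have h11 : n - 1 - (n - 2) = 1 := by omega
  rw [h11, hend] at hmain
  rw [hS1]
  have hc : ((n - 2 : ℕ) : ℝ) = (n : ℝ) - 2 := by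
    push_cast [Nat.cast_sub (by omega : 2 ≤ n)]; ring
  rw [hc] at hmain
  linarith
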